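/- arXiv:1806.08336 — 2 statements merged into one kernel-verified Lean document; each statement's English description precedes it below -/
import Mathlib

section
/- Under the hypotheses (H2) on f (Lipschitz with constant L_f), (H3) on g_i (Lipschitz with constant L_{g_i}), (H4) on φ (with constant C_φ), and with 0 < δ ≤ 1, ξ > 0: if g, h satisfy |g(t)−h(t)|^δ ≤ C₁ φ(t)^δ for t ∈ (s_i,t_{i+1}] and |g(t)−h(t)|^δ ≤ C₂ ξ^δ for t ∈ (t_i,s_i], then for all t ∈ (s_i,t_{i+1}], |g_i(s_i,g(t_i^+)) − g_i(s_i,h(t_i^+)) + (1/Γ(α))∫_{s_i}^t N_ψ^α(t,s)(f(s,g(s)) − f(s,h(s))) ds|^δ ≤ (L_{g_i}^δ + L_f^δ C_φ^δ)(C₁ + C₂)(φ(t)^δ + ξ^δ). -/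
/-!
The Lipschitz bound on `gᵢ` and the hypothesis on `(t_i, s_i]` control the jump term by
`L_{g_i}^δ C₂ ξ^δ`. In the fractional integral, `|f(s, g s) - f(s, h s)| ≤ L_f C₁^{1/δ} φ(s)`, and
since the kernel is nonnegative, (H4) bounds the integral term by `L_f C₁^{1/δ} C_φ φ(t)`, whose
`δ`-th power is `L_f^δ C_φ^δ C₁ φ(t)^δ`. The two bounds are added using `(a + b)^δ ≤ a^δ + b^δ`.
-/

open Set MeasureTheory intervalIntegral Real

/-- The kernel `N_ψ^α(t, s)`. -/
noncomputable def psiKernel (ψ : ℝ → ℝ) (α t s : ℝ) : ℝ :=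
  deriv ψ s * (ψ t - ψ s) ^ (α - 1)

/-- The `ψ`-Riemann–Liouville fractional integral `I_{a+}^{α;ψ} F (t)`. -/
noncomputable def psiFracIntegral (ψ : ℝ → ℝ) (α a t : ℝ) (F : ℝ → ℝ) : ℝ :=
  1 / Gamma α * ∫ s in a..t, psiKernel ψ α t s * F s

section Kernel

variable {ψ : ℝ → ℝ} {α a t : ℝ}

lemma psiKernel_nonneg (hψ : MonotoneOn ψ (Icc a t)) {s : ℝ} (hs : s ∈ Icc a t)
    (hψ's : 0 ≤ deriv ψ s) : 0 ≤ psiKernel ψ α t s :=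
  mul_nonneg hψ's <| rpow_nonneg
    (sub_nonneg.2 (hψ hs (right_mem_Icc.2 (hs.1.trans hs.2)) hs.2)) _

lemma hasDerivAt_neg_sub_rpow_div {s : ℝ} (hψ : DifferentiableAt ℝ ψ s) (hs : ψ s < ψ t)
    (hα : α ≠ 0) :
    HasDerivAt (fun u => -(ψ t - ψ u) ^ α / α) (psiKernel ψ α t s) s := by
  have hsub : HasDerivAt (fun u => ψ t - ψ u) (-deriv ψ s) s :=
    hψ.hasDerivAt.const_sub (ψ t)
  have hpow : HasDerivAt (fun u => (ψ t - ψ u) ^ α) (α * (ψ t - ψ s) ^ (α - 1) * -deriv ψ s) s :=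
    (hasDerivAt_rpow_const (Or.inl (sub_pos.2 hs).ne')).comp s (h := fun u => ψ t - ψ u) hsub
  have hdiv : HasDerivAt (fun u => -(ψ t - ψ u) ^ α / α)
      (-(α * (ψ t - ψ s) ^ (α - 1) * -deriv ψ s) / α) s := hpow.neg.div_const α
  convert hdiv using 1
  unfold psiKernel
  field_simp

lemma integrableOn_psiKernel (hψ : Differentiable ℝ ψ) (hmono : StrictMonoOn ψ (Icc a t))
    (hψ' : ∀ s ∈ Ioo a t, 0 ≤ deriv ψ s) (hα : 0 < α) :
    IntegrableOn (psiKernel ψ α t) (Ioc a t) := by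
  refine integrableOn_deriv_of_nonneg (g := fun u => -(ψ t - ψ u) ^ α / α) ?_
    (fun s hs => hasDerivAt_neg_sub_rpow_div (hψ s)
      (hmono (Ioo_subset_Icc_self hs) (right_mem_Icc.2 (hs.1.trans hs.2).le) hs.2) hα.ne')
    (fun s hs => psiKernel_nonneg hmono.monotoneOn (Ioo_subset_Icc_self hs) (hψ' s hs))
  exact (((continuous_const.sub hψ.continuous).continuousOn.rpow_const
    fun _ _ => Or.inr hα.le).neg).div_const _

lemma abs_psiFracIntegral_le {F φ : ℝ → ℝ} {K : ℝ} (hα : 0 < α) (hat : a ≤ t)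
    (hNφ : IntervalIntegrable (fun s => psiKernel ψ α t s * φ s) volume a t)
    (hN : ∀ s ∈ Ioc a t, 0 ≤ psiKernel ψ α t s) (hF : ∀ s ∈ Ioc a t, |F s| ≤ K * φ s) :
    |psiFracIntegral ψ α a t F| ≤ K * psiFracIntegral ψ α a t φ := by
  have hΓ : 0 ≤ 1 / Gamma α := (one_div_pos.2 (Gamma_pos_of_pos hα)).le
  have hint : |∫ s in a..t, psiKernel ψ α t s * F s| ≤
      ∫ s in a..t, K * (psiKernel ψ α t s * φ s) := by
    rw [← Real.norm_eq_abs]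
    refine norm_integral_le_of_norm_le hat (ae_of_all _ fun s hs => ?_) (hNφ.const_mul K)
    rw [Real.norm_eq_abs, abs_mul, abs_of_nonneg (hN s hs)]
    calc psiKernel ψ α t s * |F s| ≤ psiKernel ψ α t s * (K * φ s) :=
          mul_le_mul_of_nonneg_left (hF s hs) (hN s hs)
      _ = K * (psiKernel ψ α t s * φ s) := by ring
  rw [intervalIntegral.integral_const_mul] at hint
  unfold psiFracIntegral
  rw [abs_mul, abs_of_nonneg hΓ, mul_left_comm]
  gcongr

end Kernel

lemma MeasureTheory.IntegrableOn.mul_of_monotoneOn {g φ : ℝ → ℝ} {a b : ℝ}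
    (hg : IntegrableOn g (Ioc a b)) (hφ : MonotoneOn φ (Icc a b)) :
    IntegrableOn (fun s => g s * φ s) (Ioc a b) := by
  refine hg.mul_bdd (c := max |φ a| |φ b|)
    (aemeasurable_restrict_of_monotoneOn measurableSet_Ioc
      (hφ.mono Ioc_subset_Icc_self)).aestronglyMeasurable
    (ae_restrict_of_forall_mem measurableSet_Ioc fun s hs => ?_)
  have ha : a ∈ Icc a b := left_mem_Icc.2 (hs.1.le.trans hs.2)
  have hb : b ∈ Icc a b := right_mem_Icc.2 (hs.1.le.trans hs.2)
  exact abs_le_max_abs_abs (hφ ha (Ioc_subset_Icc_self hs) hs.1.le)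
    (hφ (Ioc_subset_Icc_self hs) hb hs.2)

section Rpow

variable {x y C δ : ℝ}

lemma rpow_inv_mul_rpow (hC : 0 ≤ C) (hy : 0 ≤ y) (hδ : 0 < δ) :
    (C ^ δ⁻¹ * y) ^ δ = C * y ^ δ := by
  rw [mul_rpow (rpow_nonneg hC _) hy, rpow_inv_rpow hC hδ.ne']

lemma le_rpow_inv_mul_of_rpow_le (hx : 0 ≤ x) (hy : 0 ≤ y) (hC : 0 ≤ C) (hδ : 0 < δ)
    (h : x ^ δ ≤ C * y ^ δ) : x ≤ C ^ δ⁻¹ * y := by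
  rwa [← rpow_le_rpow_iff hx (by positivity) hδ, rpow_inv_mul_rpow hC hy hδ]

lemma abs_rpow_le_of_abs_le_mul {L w : ℝ} (hL : 0 ≤ L) (hδ : 0 ≤ δ) (hx : |x| ≤ L * |y|)
    (hy : |y| ^ δ ≤ C * w ^ δ) : |x| ^ δ ≤ L ^ δ * (C * w ^ δ) :=
  calc |x| ^ δ ≤ (L * |y|) ^ δ := rpow_le_rpow (abs_nonneg _) hx hδ
    _ = L ^ δ * |y| ^ δ := mul_rpow hL (abs_nonneg _)
    _ ≤ L ^ δ * (C * w ^ δ) := by gcongr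

lemma abs_add_rpow_le (hδ0 : 0 ≤ δ) (hδ1 : δ ≤ 1) : |x + y| ^ δ ≤ |x| ^ δ + |y| ^ δ :=
  (rpow_le_rpow (abs_nonneg _) (abs_add_le x y) hδ0).trans
    (rpow_add_le_add_rpow (abs_nonneg _) (abs_nonneg _) hδ0 hδ1)

end Rpow

lemma abs_psiFracIntegral_rpow_le {ψ F G φ : ℝ → ℝ} {α a t δ L C Cφ : ℝ} (hα : 0 < α)
    (hat : a ≤ t) (hδ : 0 < δ) (hL : 0 ≤ L) (hC : 0 ≤ C) (hCφ : 0 ≤ Cφ)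
    (hφ : ∀ s ∈ Icc a t, 0 ≤ φ s)
    (hNφ : IntervalIntegrable (fun s => psiKernel ψ α t s * φ s) volume a t)
    (hN : ∀ s ∈ Ioc a t, 0 ≤ psiKernel ψ α t s) (hF : ∀ s ∈ Ioc a t, |F s| ≤ L * |G s|)
    (hG : ∀ s ∈ Ioc a t, |G s| ^ δ ≤ C * φ s ^ δ)
    (hφt : psiFracIntegral ψ α a t φ ≤ Cφ * φ t) :
    |psiFracIntegral ψ α a t F| ^ δ ≤ L ^ δ * Cφ ^ δ * (C * φ t ^ δ) := by
  have hφt₀ : 0 ≤ φ t := hφ t (right_mem_Icc.2 hat)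
  have hFφ : ∀ s ∈ Ioc a t, |F s| ≤ L * C ^ δ⁻¹ * φ s := fun s hs =>
    calc |F s| ≤ L * |G s| := hF s hs
      _ ≤ L * (C ^ δ⁻¹ * φ s) := by
        gcongr
        exact le_rpow_inv_mul_of_rpow_le (abs_nonneg _) (hφ s (Ioc_subset_Icc_self hs)) hC hδ
          (hG s hs)
      _ = L * C ^ δ⁻¹ * φ s := by ring
  have hI : |psiFracIntegral ψ α a t F| ≤ L * Cφ * (C ^ δ⁻¹ * φ t) :=
    calc |psiFracIntegral ψ α a t F| ≤ L * C ^ δ⁻¹ * psiFracIntegral ψ α a t φ :=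
          abs_psiFracIntegral_le hα hat hNφ hN hFφ
      _ ≤ L * C ^ δ⁻¹ * (Cφ * φ t) := by gcongr
      _ = L * Cφ * (C ^ δ⁻¹ * φ t) := by ring
  calc |psiFracIntegral ψ α a t F| ^ δ ≤ (L * Cφ * (C ^ δ⁻¹ * φ t)) ^ δ :=
        rpow_le_rpow (abs_nonneg _) hI hδ.le
    _ = L ^ δ * Cφ ^ δ * (C * φ t ^ δ) := by
        rw [mul_rpow (by positivity) (by positivity), mul_rpow hL hCφ,
          rpow_inv_mul_rpow hC hφt₀ hδ]

lemma mul_mul_add_mul_mul_le {a b c d x y : ℝ} (ha : 0 ≤ a) (hb : 0 ≤ b) (hc : 0 ≤ c)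
    (hd : 0 ≤ d) (hx : 0 ≤ x) (hy : 0 ≤ y) :
    a * (d * y) + b * (c * x) ≤ (a + b) * (c + d) * (x + y) := by
  nlinarith [mul_nonneg (mul_nonneg ha hc) (add_nonneg hx hy),
    mul_nonneg (mul_nonneg hb hd) (add_nonneg hx hy), mul_nonneg (mul_nonneg ha hd) hx,
    mul_nonneg (mul_nonneg hb hc) hy]

theorem stmt_13_general (T tᵢ sᵢ tᵢ₁ : ℝ) (h0ti : 0 ≤ tᵢ) (htisi : tᵢ ≤ sᵢ)
    (hti1T : tᵢ₁ ≤ T)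
    (f : ℝ → ℝ → ℝ) (Lf : ℝ) (hLf : 0 ≤ Lf)
    (hf : ∀ t u v, |f t u - f t v| ≤ Lf * |u - v|)
    (gi : ℝ → ℝ → ℝ) (Lgi : ℝ) (hLgi : 0 ≤ Lgi)
    (hgi : ∀ t u v, |gi t u - gi t v| ≤ Lgi * |u - v|)
    (ψ : ℝ → ℝ) (hψ : ContDiff ℝ 1 ψ) (hmono : StrictMonoOn ψ (Set.Icc 0 T))
    (hψ' : ∀ t ∈ Set.Icc 0 T, 0 < deriv ψ t)
    (α : ℝ) (hα0 : 0 < α)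
    (δ ξ : ℝ) (hδ0 : 0 < δ) (hδ1 : δ ≤ 1) (hξ : 0 < ξ)
    (φ : ℝ → ℝ) (hφmono : MonotoneOn φ (Set.Icc 0 T))
    (hφ0 : ∀ t ∈ Set.Icc 0 T, 0 ≤ φ t)
    (Cφ : ℝ) (hCφ : 0 ≤ Cφ)
    (hH4 : ∀ t ∈ Set.Icc 0 T,
      (1 / Real.Gamma α) * ∫ s in sᵢ..t, deriv ψ s * (ψ t - ψ s) ^ (α - 1) * φ s ≤
        Cφ * φ t)
    (C₁ C₂ : ℝ) (hC₁ : 0 ≤ C₁) (hC₂ : 0 ≤ C₂)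
    (g h : ℝ → ℝ)
    (hgh1 : ∀ t ∈ Set.Ioc sᵢ tᵢ₁, |g t - h t| ^ δ ≤ C₁ * φ t ^ δ)
    (gp hp : ℝ) (hgh2 : |gp - hp| ^ δ ≤ C₂ * ξ ^ δ) :
    ∀ t ∈ Set.Ioc sᵢ tᵢ₁,
      |gi sᵢ gp - gi sᵢ hp +
          (1 / Real.Gamma α) * ∫ s in sᵢ..t,
            deriv ψ s * (ψ t - ψ s) ^ (α - 1) * (f s (g s) - f s (h s))| ^ δ ≤
        (Lgi ^ δ + Lf ^ δ * Cφ ^ δ) * (C₁ + C₂) * (φ t ^ δ + ξ ^ δ) := by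
  intro t ⟨hst, htt₁⟩
  have hsub : Icc sᵢ t ⊆ Icc 0 T := Icc_subset_Icc (h0ti.trans htisi) (htt₁.trans hti1T)
  have ht : t ∈ Icc 0 T := hsub (right_mem_Icc.2 hst.le)
  have hN : ∀ s ∈ Ioc sᵢ t, 0 ≤ psiKernel ψ α t s := fun s hs =>
    psiKernel_nonneg (hmono.monotoneOn.mono hsub) (Ioc_subset_Icc_self hs)
      (hψ' s (hsub (Ioc_subset_Icc_self hs))).le
  have hNφ : IntervalIntegrable (fun s => psiKernel ψ α t s * φ s) volume sᵢ t :=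
    (intervalIntegrable_iff_integrableOn_Ioc_of_le hst.le).2 <|
      (integrableOn_psiKernel (hψ.differentiable one_ne_zero) (hmono.mono hsub)
        (fun s hs => (hψ' s (hsub (Ioo_subset_Icc_self hs))).le) hα0).mul_of_monotoneOn
        (hφmono.mono hsub)
  have hjump : |gi sᵢ gp - gi sᵢ hp| ^ δ ≤ Lgi ^ δ * (C₂ * ξ ^ δ) :=
    abs_rpow_le_of_abs_le_mul hLgi hδ0.le (hgi sᵢ gp hp) hgh2
  have hint := abs_psiFracIntegral_rpow_le (F := fun s => f s (g s) - f s (h s)) hα0 hst.le hδ0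
    hLf hC₁ hCφ (fun s hs => hφ0 s (hsub hs)) hNφ hN (fun s _ => hf s _ _)
    (fun s hs => hgh1 s ⟨hs.1, hs.2.trans htt₁⟩) (hH4 t ht)
  calc _ ≤ |gi sᵢ gp - gi sᵢ hp| ^ δ + |psiFracIntegral ψ α sᵢ t _| ^ δ :=
        abs_add_rpow_le hδ0.le hδ1
    _ ≤ Lgi ^ δ * (C₂ * ξ ^ δ) + Lf ^ δ * Cφ ^ δ * (C₁ * φ t ^ δ) := add_le_add hjump hint
    _ ≤ _ := mul_mul_add_mul_mul_le (by positivity) (by positivity) hC₁ hC₂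
        (rpow_nonneg (hφ0 t ht) δ) (rpow_nonneg hξ.le δ)

theorem stmt_13 (T tᵢ sᵢ tᵢ₁ : ℝ) (h0ti : 0 ≤ tᵢ) (htisi : tᵢ ≤ sᵢ)
    (hsiti1 : sᵢ < tᵢ₁) (hti1T : tᵢ₁ ≤ T)
    (f : ℝ → ℝ → ℝ) (Lf : ℝ) (hLf : 0 ≤ Lf)
    (hf : ∀ t u v, |f t u - f t v| ≤ Lf * |u - v|)
    (gi : ℝ → ℝ → ℝ) (Lgi : ℝ) (hLgi : 0 ≤ Lgi)
    (hgi : ∀ t u v, |gi t u - gi t v| ≤ Lgi * |u - v|)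
    (ψ : ℝ → ℝ) (hψ : ContDiff ℝ 1 ψ) (hmono : StrictMonoOn ψ (Set.Icc 0 T))
    (hψ' : ∀ t ∈ Set.Icc 0 T, 0 < deriv ψ t)
    (α : ℝ) (hα0 : 0 < α) (hα1 : α ≤ 1)
    (δ ξ : ℝ) (hδ0 : 0 < δ) (hδ1 : δ ≤ 1) (hξ : 0 < ξ)
    (φ : ℝ → ℝ) (hφmono : MonotoneOn φ (Set.Icc 0 T))
    (hφ0 : ∀ t ∈ Set.Icc 0 T, 0 ≤ φ t)
    (Cφ : ℝ) (hCφ : 0 ≤ Cφ)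
    (hH4 : ∀ t ∈ Set.Icc 0 T,
      (1 / Real.Gamma α) * ∫ s in sᵢ..t, deriv ψ s * (ψ t - ψ s) ^ (α - 1) * φ s ≤
        Cφ * φ t)
    (C₁ C₂ : ℝ) (hC₁ : 0 ≤ C₁) (hC₂ : 0 ≤ C₂)
    (g h : ℝ → ℝ)
    (hgh1 : ∀ t ∈ Set.Ioc sᵢ tᵢ₁, |g t - h t| ^ δ ≤ C₁ * φ t ^ δ)
    (gp hp : ℝ) (hgh2 : |gp - hp| ^ δ ≤ C₂ * ξ ^ δ) :
    ∀ t ∈ Set.Ioc sᵢ tᵢ₁,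
      |gi sᵢ gp - gi sᵢ hp +
          (1 / Real.Gamma α) * ∫ s in sᵢ..t,
            deriv ψ s * (ψ t - ψ s) ^ (α - 1) * (f s (g s) - f s (h s))| ^ δ ≤
        (Lgi ^ δ + Lf ^ δ * Cφ ^ δ) * (C₁ + C₂) * (φ t ^ δ + ξ ^ δ) :=
  stmt_13_general T tᵢ sᵢ tᵢ₁ h0ti htisi hti1T f Lf hLf hf gi Lgi hLgi hgi ψ hψ hmono hψ' α hα0 δ ξ
    hδ0 hδ1 hξ φ hφmono hφ0 Cφ hCφ hH4 C₁ C₂ hC₁ hC₂ g h hgh1 gp hp hgh2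
end

section
/- Theorem (generalized δ-Ulam–Hyers–Rassias stability, one-interval case without impulses): Let J = [0,T], 0 < α ≤ 1, 0 ≤ β ≤ 1, γ = α + β(1−α), 0 < δ ≤ 1, ψ : J → ℝ C¹ increasing with ψ' > 0, and f : J × ℝ → ℝ continuous with Lipschitz constant L_f in the second variable. Let φ : J → (0,∞) be continuous nondecreasing with (1/Γ(α))∫₀ᵗ N_ψ^α(t,s)φ(s)ds ≤ C_φ φ(t) for all t. Assume L_f^δ C_φ^δ < 1. If a continuous y : J → ℝ satisfies |y(t) − Ψ(t)x₀ − (1/Γ(α))∫₀ᵗ N_ψ^α(t,s) f(s,y(s))ds| ≤ (1/Γ(α))∫₀ᵗ N_ψ^α(t,s)φ(s)ds for all t, then there exists a unique continuous y₀ : J → ℝ with y₀(t) = Ψ(t)x₀ + (1/Γ(α))∫₀ᵗ N_ψ^α(t,s) f(s,y₀(s))ds for all t, and |y(t) − y₀(t)|^δ ≤ C_φ^δ φ(t)^δ/(1 − L_f^δ C_φ^δ) for all t ∈ J. -/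
/-!
Write `K u = Ψ x₀ + I^α_ψ (f ∘ u)`, so that the integral equation reads `u = K u`. For the
weighted distance `sup_{[0,T]} |u - v| / φ`, the Lipschitz bound on `f` together with
`I^α_ψ φ ≤ C_φ φ` makes `K` a contraction with constant `k = L_f C_φ`, and `k < 1` because
`k^δ < 1`. Banach's theorem gives the unique solution `y₀`, and the a priori estimate
`d(y, y₀) ≤ d(y, K y) / (1 - k) ≤ C_φ / (1 - k)` is the stability bound; it takes the stated
`δ`-form since `1 - k^δ ≤ (1 - k)^δ` by subadditivity of `x ↦ x^δ`.

Two continuity facts make `K` act on continuous functions. The kernel `ψ'(s) (ψ t - ψ s)^(α-1)`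
has the explicit primitive `-(ψ t - ψ s)^α / α`, which gives
`|∫₀ᵗ … - ∫₀^{t'} …| ≤ 2 M (ψ t - ψ t')^α / α` and hence continuity of `I^α_ψ g`. The singular
term `Ψ x₀` is continuous as well: when `γ < 1` and `x₀ ≠ 0` it blows up at `0`, which is
impossible for a function within `C_φ φ` of the continuous `y - I^α_ψ (f ∘ y)`.
-/

open intervalIntegral MeasureTheory Set Filter Topology
open scoped NNReal

section Kernel

variable {a b c α : ℝ} {ψ g h w : ℝ → ℝ}

lemma strictMonoOn_Icc_of_deriv_pos (hψ : Differentiable ℝ ψ)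
    (hψ' : ∀ s ∈ Icc a b, 0 < deriv ψ s) : StrictMonoOn ψ (Icc a b) :=
  strictMonoOn_of_deriv_pos (convex_Icc a b) hψ.continuous.continuousOn
    fun s hs => hψ' s (interior_subset hs)

lemma hasDerivAt_neg_rpow_sub_div {s : ℝ} (hα : α ≠ 0) (hψ : DifferentiableAt ℝ ψ s)
    (hs : ψ s < c) :
    HasDerivAt (fun s => -(c - ψ s) ^ α / α) (deriv ψ s * (c - ψ s) ^ (α - 1)) s := by
  have h : HasDerivAt (fun s => -(c - ψ s) ^ α / α)
      (-(-deriv ψ s * α * (c - ψ s) ^ (α - 1)) / α) s :=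
    ((hψ.hasDerivAt.const_sub c).rpow_const (Or.inl (sub_pos.2 hs).ne')).neg.div_const α
  exact h.congr_deriv (by field_simp)

lemma continuousOn_neg_rpow_sub_div (hα : 0 < α) (hψ : Continuous ψ) :
    ContinuousOn (fun s => -(c - ψ s) ^ α / α) (Icc a b) :=
  ((continuous_const.sub hψ).rpow_const fun _ => Or.inr hα.le).neg.div_const α |>.continuousOn

lemma intervalIntegrable_kernel (hα : 0 < α) (hψ : Differentiable ℝ ψ) (hab : a ≤ b)
    (hψ' : ∀ s ∈ Icc a b, 0 < deriv ψ s) (hc : ψ b ≤ c) :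
    IntervalIntegrable (fun s => deriv ψ s * (c - ψ s) ^ (α - 1)) volume a b := by
  have hlt : ∀ s ∈ Ioo a b, ψ s < c := fun s hs =>
    (strictMonoOn_Icc_of_deriv_pos hψ hψ' (Ioo_subset_Icc_self hs) (right_mem_Icc.2 hab)
      hs.2).trans_le hc
  refine (intervalIntegrable_iff_integrableOn_Ioc_of_le hab).2 <|
    integrableOn_deriv_of_nonneg (continuousOn_neg_rpow_sub_div hα hψ.continuous)
      (fun s hs => hasDerivAt_neg_rpow_sub_div hα.ne' (hψ s) (hlt s hs)) fun s hs => ?_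
  exact mul_nonneg (hψ' s (Ioo_subset_Icc_self hs)).le
    (Real.rpow_nonneg (sub_pos.2 (hlt s hs)).le _)

lemma integral_kernel (hα : 0 < α) (hψ : Differentiable ℝ ψ) (hab : a ≤ b)
    (hψ' : ∀ s ∈ Icc a b, 0 < deriv ψ s) (hc : ψ b ≤ c) :
    ∫ s in a..b, deriv ψ s * (c - ψ s) ^ (α - 1) = ((c - ψ a) ^ α - (c - ψ b) ^ α) / α := by
  have hmono := strictMonoOn_Icc_of_deriv_pos hψ hψ'
  rw [integral_eq_sub_of_hasDerivAt_of_le hab (continuousOn_neg_rpow_sub_div hα hψ.continuous)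
    (fun s hs => hasDerivAt_neg_rpow_sub_div hα.ne' (hψ s)
      ((hmono (Ioo_subset_Icc_self hs) (right_mem_Icc.2 hab) hs.2).trans_le hc))
    (intervalIntegrable_kernel hα hψ hab hψ' hc)]
  ring

lemma intervalIntegrable_kernel_mul (hα : 0 < α) (hψ : Differentiable ℝ ψ) (hab : a ≤ b)
    (hψ' : ∀ s ∈ Icc a b, 0 < deriv ψ s) (hc : ψ b ≤ c) (hg : ContinuousOn g (Icc a b)) :
    IntervalIntegrable (fun s => deriv ψ s * (c - ψ s) ^ (α - 1) * g s) volume a b :=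
  (intervalIntegrable_kernel hα hψ hab hψ' hc).mul_continuousOn (by rwa [uIcc_of_le hab])

lemma abs_integral_mul_le_integral_mul (hab : a ≤ b)
    (hwh : IntervalIntegrable (fun s => w s * h s) volume a b)
    (hw : ∀ s ∈ Ioo a b, 0 ≤ w s) (hgh : ∀ s ∈ Ioo a b, |g s| ≤ h s) :
    |∫ s in a..b, w s * g s| ≤ ∫ s in a..b, w s * h s := by
  rw [← Real.norm_eq_abs]
  refine norm_integral_le_of_norm_le hab ?_ hwh
  filter_upwards [volume.ae_ne b] with s hsb hs
  have hs' : s ∈ Ioo a b := ⟨hs.1, lt_of_le_of_ne hs.2 hsb⟩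
  rw [Real.norm_eq_abs, abs_mul, abs_of_nonneg (hw s hs')]
  exact mul_le_mul_of_nonneg_left (hgh s hs') (hw s hs')

variable {M : ℝ}

lemma abs_integral_kernel_mul_le (hα : 0 < α) (hψ : Differentiable ℝ ψ) (hab : a ≤ b)
    (hψ' : ∀ s ∈ Icc a b, 0 < deriv ψ s) (hM : ∀ s ∈ Icc a b, |g s| ≤ M) :
    |∫ s in a..b, deriv ψ s * (ψ b - ψ s) ^ (α - 1) * g s| ≤ M * ((ψ b - ψ a) ^ α / α) := by
  have hmono := strictMonoOn_Icc_of_deriv_pos hψ hψ'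
  have hk := intervalIntegrable_kernel hα hψ hab hψ' le_rfl
  calc |∫ s in a..b, deriv ψ s * (ψ b - ψ s) ^ (α - 1) * g s|
      ≤ ∫ s in a..b, deriv ψ s * (ψ b - ψ s) ^ (α - 1) * M := by
        refine abs_integral_mul_le_integral_mul hab (hk.mul_const M) (fun s hs => ?_)
          fun s hs => hM s (Ioo_subset_Icc_self hs)
        exact mul_nonneg (hψ' s (Ioo_subset_Icc_self hs)).le (Real.rpow_nonneg (sub_nonneg.2
          (hmono.monotoneOn (Ioo_subset_Icc_self hs) (right_mem_Icc.2 hab) hs.2.le)) _)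
    _ = M * ((ψ b - ψ a) ^ α / α) := by
        rw [intervalIntegral.integral_mul_const, integral_kernel hα hψ hab hψ' le_rfl, sub_self,
          Real.zero_rpow hα.ne']
        ring

lemma abs_integral_kernel_sub_kernel_mul_le (hα0 : 0 < α) (hα1 : α ≤ 1)
    (hψ : Differentiable ℝ ψ) {t' t : ℝ} (hat' : a ≤ t') (ht't : t' ≤ t)
    (hψ' : ∀ s ∈ Icc a t, 0 < deriv ψ s) (hg : ContinuousOn g (Icc a t))
    (hM : ∀ s ∈ Icc a t, |g s| ≤ M) :
    |(∫ s in a..t', deriv ψ s * (ψ t - ψ s) ^ (α - 1) * g s) -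
        ∫ s in a..t', deriv ψ s * (ψ t' - ψ s) ^ (α - 1) * g s| ≤
      M * ((ψ t - ψ t') ^ α / α) := by
  have hsub : Icc a t' ⊆ Icc a t := Icc_subset_Icc_right ht't
  have hmono := strictMonoOn_Icc_of_deriv_pos hψ hψ'
  have hψ't' : ∀ s ∈ Icc a t', 0 < deriv ψ s := fun s hs => hψ' s (hsub hs)
  have hψt't : ψ t' ≤ ψ t := hmono.monotoneOn (hsub (right_mem_Icc.2 hat'))
    (right_mem_Icc.2 (hat'.trans ht't)) ht't
  have hk := intervalIntegrable_kernel hα0 hψ hat' hψ't' hψt't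
  have hk' := intervalIntegrable_kernel hα0 hψ hat' hψ't' le_rfl
  have hdiff : (∫ s in a..t', deriv ψ s * (ψ t' - ψ s) ^ (α - 1) * g s) -
      (∫ s in a..t', deriv ψ s * (ψ t - ψ s) ^ (α - 1) * g s) =
      ∫ s in a..t', (deriv ψ s * (ψ t' - ψ s) ^ (α - 1) - deriv ψ s * (ψ t - ψ s) ^ (α - 1)) *
        g s := by
    rw [← integral_sub (intervalIntegrable_kernel_mul hα0 hψ hat' hψ't' le_rfl (hg.mono hsub))
      (intervalIntegrable_kernel_mul hα0 hψ hat' hψ't' hψt't (hg.mono hsub))]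
    simp only [sub_mul]
  rw [abs_sub_comm, hdiff]
  calc _ ≤ ∫ s in a..t', (deriv ψ s * (ψ t' - ψ s) ^ (α - 1) -
          deriv ψ s * (ψ t - ψ s) ^ (α - 1)) * M := by
        refine abs_integral_mul_le_integral_mul hat' ((hk'.sub hk).mul_const M) (fun s hs => ?_)
          fun s hs => hM s (hsub (Ioo_subset_Icc_self hs))
        have hs' : s ∈ Icc a t := hsub (Ioo_subset_Icc_self hs)
        have hpos : 0 < ψ t' - ψ s :=
          sub_pos.2 (hmono hs' (hsub (right_mem_Icc.2 hat')) hs.2)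
        rw [← mul_sub]
        exact mul_nonneg (hψ' s hs').le (sub_nonneg.2 (Real.rpow_le_rpow_of_nonpos hpos
          (by linarith) (by linarith)))
    _ = ((ψ t' - ψ a) ^ α - ((ψ t - ψ a) ^ α - (ψ t - ψ t') ^ α)) / α * M := by
        rw [intervalIntegral.integral_mul_const, integral_sub hk' hk,
          integral_kernel hα0 hψ hat' hψ't' le_rfl,
          integral_kernel hα0 hψ hat' hψ't' hψt't, sub_self, Real.zero_rpow hα0.ne']
        ring
    _ ≤ M * ((ψ t - ψ t') ^ α / α) := by
        have hM0 : 0 ≤ M := (abs_nonneg _).trans (hM a (left_mem_Icc.2 (hat'.trans ht't)))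
        have hψat' : 0 ≤ ψ t' - ψ a := sub_nonneg.2 (hmono.monotoneOn (left_mem_Icc.2
          (hat'.trans ht't)) (hsub (right_mem_Icc.2 hat')) hat')
        have : (ψ t' - ψ a) ^ α ≤ (ψ t - ψ a) ^ α :=
          Real.rpow_le_rpow hψat' (by linarith) hα0.le
        rw [mul_comm]
        exact mul_le_mul_of_nonneg_left (div_le_div_of_nonneg_right (by linarith) hα0.le) hM0

lemma abs_integral_kernel_sub_le (hα0 : 0 < α) (hα1 : α ≤ 1)
    (hψ : Differentiable ℝ ψ) {t' t : ℝ} (hat' : a ≤ t') (ht't : t' ≤ t)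
    (hψ' : ∀ s ∈ Icc a t, 0 < deriv ψ s) (hg : ContinuousOn g (Icc a t))
    (hM : ∀ s ∈ Icc a t, |g s| ≤ M) :
    |(∫ s in a..t, deriv ψ s * (ψ t - ψ s) ^ (α - 1) * g s) -
        ∫ s in a..t', deriv ψ s * (ψ t' - ψ s) ^ (α - 1) * g s| ≤
      2 * (M * ((ψ t - ψ t') ^ α / α)) := by
  have hleft : Icc a t' ⊆ Icc a t := Icc_subset_Icc_right ht't
  have hright : Icc t' t ⊆ Icc a t := Icc_subset_Icc_left hat'
  have hψt't : ψ t' ≤ ψ t := (strictMonoOn_Icc_of_deriv_pos hψ hψ').monotoneOn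
    (hleft (right_mem_Icc.2 hat')) (right_mem_Icc.2 (hat'.trans ht't)) ht't
  rw [← integral_add_adjacent_intervals
    (intervalIntegrable_kernel_mul hα0 hψ hat' (fun s hs => hψ' s (hleft hs)) hψt't
      (hg.mono hleft))
    (intervalIntegrable_kernel_mul hα0 hψ ht't (fun s hs => hψ' s (hright hs)) le_rfl
      (hg.mono hright))]
  calc _ = |((∫ s in a..t', deriv ψ s * (ψ t - ψ s) ^ (α - 1) * g s) -
          ∫ s in a..t', deriv ψ s * (ψ t' - ψ s) ^ (α - 1) * g s) +
          ∫ s in t'..t, deriv ψ s * (ψ t - ψ s) ^ (α - 1) * g s| := by ring_nf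
    _ ≤ _ := abs_add_le _ _
    _ ≤ M * ((ψ t - ψ t') ^ α / α) + M * ((ψ t - ψ t') ^ α / α) :=
        add_le_add (abs_integral_kernel_sub_kernel_mul_le hα0 hα1 hψ hat' ht't hψ' hg hM)
          (abs_integral_kernel_mul_le hα0 hψ ht't (fun s hs => hψ' s (hright hs))
            fun s hs => hM s (hright hs))
    _ = _ := by ring

lemma continuousOn_integral_kernel_mul (hα0 : 0 < α) (hα1 : α ≤ 1) (hψ : Differentiable ℝ ψ)
    (hψ' : ∀ s ∈ Icc a b, 0 < deriv ψ s) (hg : ContinuousOn g (Icc a b)) :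
    ContinuousOn (fun t => ∫ s in a..t, deriv ψ s * (ψ t - ψ s) ^ (α - 1) * g s) (Icc a b) := by
  obtain ⟨M, hM⟩ := isCompact_Icc.exists_bound_of_continuousOn hg
  have hdist : ∀ t ∈ Icc a b, ∀ t' ∈ Icc a b,
      dist (∫ s in a..t, deriv ψ s * (ψ t - ψ s) ^ (α - 1) * g s)
        (∫ s in a..t', deriv ψ s * (ψ t' - ψ s) ^ (α - 1) * g s) ≤
      2 * (M * (|ψ t - ψ t'| ^ α / α)) := by
    intro t ht t' ht'
    have hsub : ∀ {u}, u ∈ Icc a b → Icc a u ⊆ Icc a b := fun hu => Icc_subset_Icc_right hu.2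
    have hmono := (strictMonoOn_Icc_of_deriv_pos hψ hψ').monotoneOn
    rw [Real.dist_eq]
    rcases le_total t' t with h | h
    · rw [abs_of_nonneg (sub_nonneg.2 (hmono ht' ht h))]
      exact abs_integral_kernel_sub_le hα0 hα1 hψ ht'.1 h (fun s hs => hψ' s (hsub ht hs))
        (hg.mono (hsub ht)) fun s hs => by simpa using hM s (hsub ht hs)
    · rw [abs_sub_comm, abs_sub_comm (ψ t), abs_of_nonneg (sub_nonneg.2 (hmono ht ht' h))]
      exact abs_integral_kernel_sub_le hα0 hα1 hψ ht.1 h (fun s hs => hψ' s (hsub ht' hs))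
        (hg.mono (hsub ht')) fun s hs => by simpa using hM s (hsub ht' hs)
  intro t₀ ht₀
  rw [ContinuousWithinAt, tendsto_iff_dist_tendsto_zero]
  refine squeeze_zero' (Eventually.of_forall fun _ => dist_nonneg)
    (eventually_nhdsWithin_of_forall fun t ht => hdist t ht t₀ ht₀) ?_
  have hcont : Continuous fun t => 2 * (M * (|ψ t - ψ t₀| ^ α / α)) :=
    continuous_const.mul (continuous_const.mul
      (((hψ.continuous.sub continuous_const).abs.rpow_const fun _ => Or.inr hα0.le).div_const α))
  simpa [Real.zero_rpow hα0.ne'] using (hcont.tendsto t₀).mono_left nhdsWithin_le_nhds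

end Kernel

/-- The `ψ`-Riemann–Liouville fractional integral `I^α_{0+;ψ} g`. -/
noncomputable def psiIntegral (α : ℝ) (ψ g : ℝ → ℝ) (t : ℝ) : ℝ :=
  1 / Real.Gamma α * ∫ s in (0 : ℝ)..t, deriv ψ s * (ψ t - ψ s) ^ (α - 1) * g s

section PsiIntegral

variable {α T : ℝ} {ψ g g₁ g₂ h : ℝ → ℝ}

lemma continuousOn_psiIntegral (hα0 : 0 < α) (hα1 : α ≤ 1) (hψ : Differentiable ℝ ψ)
    (hψ' : ∀ s ∈ Icc 0 T, 0 < deriv ψ s) (hg : ContinuousOn g (Icc 0 T)) :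
    ContinuousOn (psiIntegral α ψ g) (Icc 0 T) :=
  (continuousOn_integral_kernel_mul hα0 hα1 hψ hψ' hg).const_smul (1 / Real.Gamma α)

lemma psiIntegral_const_mul (c : ℝ) (t : ℝ) :
    psiIntegral α ψ (fun s => c * g s) t = c * psiIntegral α ψ g t := by
  simp only [psiIntegral, mul_left_comm _ c, intervalIntegral.integral_const_mul]

lemma abs_psiIntegral_sub_le (hα : 0 < α) (hψ : Differentiable ℝ ψ)
    (hψ' : ∀ s ∈ Icc 0 T, 0 < deriv ψ s) (hg₁ : ContinuousOn g₁ (Icc 0 T))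
    (hg₂ : ContinuousOn g₂ (Icc 0 T)) (hh : ContinuousOn h (Icc 0 T))
    (hgh : ∀ s ∈ Icc 0 T, |g₁ s - g₂ s| ≤ h s) {t : ℝ} (ht : t ∈ Icc 0 T) :
    |psiIntegral α ψ g₁ t - psiIntegral α ψ g₂ t| ≤ psiIntegral α ψ h t := by
  have hsub : Icc 0 t ⊆ Icc 0 T := Icc_subset_Icc_right ht.2
  have hψt : ∀ s ∈ Icc 0 t, 0 < deriv ψ s := fun s hs => hψ' s (hsub hs)
  have hint : ∀ {g}, ContinuousOn g (Icc 0 T) → IntervalIntegrable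
      (fun s => deriv ψ s * (ψ t - ψ s) ^ (α - 1) * g s) volume 0 t :=
    fun hg => intervalIntegrable_kernel_mul hα hψ ht.1 hψt le_rfl (hg.mono hsub)
  have hmono := (strictMonoOn_Icc_of_deriv_pos hψ hψt).monotoneOn
  rw [psiIntegral, psiIntegral, psiIntegral, ← mul_sub, ← integral_sub (hint hg₁) (hint hg₂),
    abs_mul, abs_of_nonneg (one_div_nonneg.2 (Real.Gamma_pos_of_pos hα).le)]
  refine mul_le_mul_of_nonneg_left ?_ (one_div_nonneg.2 (Real.Gamma_pos_of_pos hα).le)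
  simp only [← mul_sub]
  refine abs_integral_mul_le_integral_mul ht.1 (hint hh) (fun s hs => ?_)
    fun s hs => hgh s (hsub (Ioo_subset_Icc_self hs))
  exact mul_nonneg (hψt s (Ioo_subset_Icc_self hs)).le (Real.rpow_nonneg
    (sub_nonneg.2 (hmono (Ioo_subset_Icc_self hs) (right_mem_Icc.2 ht.1) hs.2.le)) _)

lemma abs_psiIntegral_comp_sub_le {f : ℝ → ℝ → ℝ} {u v φ : ℝ → ℝ} {Lf D : ℝ} (hα : 0 < α)
    (hψ : Differentiable ℝ ψ) (hψ' : ∀ s ∈ Icc 0 T, 0 < deriv ψ s)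
    (hfcont : Continuous fun p : ℝ × ℝ => f p.1 p.2) (hLf : 0 ≤ Lf)
    (hf : ∀ t u v, |f t u - f t v| ≤ Lf * |u - v|) (hφ : ContinuousOn φ (Icc 0 T))
    (hu : Continuous u) (hv : Continuous v) (huv : ∀ s ∈ Icc 0 T, |u s - v s| ≤ D * φ s)
    {t : ℝ} (ht : t ∈ Icc 0 T) :
    |psiIntegral α ψ (fun s => f s (u s)) t - psiIntegral α ψ (fun s => f s (v s)) t| ≤
      Lf * D * psiIntegral α ψ φ t := by
  have hfw : ∀ {w : ℝ → ℝ}, Continuous w → ContinuousOn (fun s => f s (w s)) (Icc 0 T) :=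
    fun hw => (hfcont.comp (continuous_id.prodMk hw)).continuousOn
  have hφD : ContinuousOn (fun s => Lf * D * φ s) (Icc 0 T) := continuousOn_const.mul hφ
  rw [← psiIntegral_const_mul]
  refine abs_psiIntegral_sub_le hα hψ hψ' (hfw hu) (hfw hv) hφD
    (fun s hs => (hf s _ _).trans ?_) ht
  rw [mul_assoc]
  exact mul_le_mul_of_nonneg_left (huv s hs) hLf

end PsiIntegral
section WeightedFixedPoint

variable {X : Type*} [TopologicalSpace X] [CompactSpace X]

lemma dist_mul_inv_weight_le_iff {φ φinv : C(X, ℝ)} (hφ : ∀ x, 0 < φ x)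
    (hφinv : ∀ x, φinv x = (φ x)⁻¹) (u v : C(X, ℝ)) {D : ℝ} (hD : 0 ≤ D) :
    dist (φinv * u) (φinv * v) ≤ D ↔ ∀ x, |u x - v x| ≤ D * φ x := by
  rw [ContinuousMap.dist_le hD]
  refine forall_congr' fun x => ?_
  rw [ContinuousMap.mul_apply, ContinuousMap.mul_apply, hφinv, Real.dist_eq, ← mul_sub, abs_mul,
    abs_inv, abs_of_pos (hφ x), inv_mul_le_iff₀ (hφ x), mul_comm]

theorem exists_fixedPoint_of_weighted_contraction (φ : C(X, ℝ)) (hφ : ∀ x, 0 < φ x)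
    (Θ : C(X, ℝ) → C(X, ℝ)) {k : ℝ≥0} (hk : k < 1)
    (hΘ : ∀ u v (D : ℝ), 0 ≤ D → (∀ x, |u x - v x| ≤ D * φ x) →
      ∀ x, |Θ u x - Θ v x| ≤ k * D * φ x) :
    ∃ u₀, Θ u₀ = u₀ ∧ (∀ v, Θ v = v → v = u₀) ∧
      ∀ y (ε : ℝ), 0 ≤ ε → (∀ x, |y x - Θ y x| ≤ ε * φ x) →
        ∀ x, |y x - u₀ x| ≤ ε * φ x / (1 - k) := by
  let φinv : C(X, ℝ) := ⟨fun x => (φ x)⁻¹, φ.continuous.inv₀ fun x => (hφ x).ne'⟩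
  have hdist := dist_mul_inv_weight_le_iff hφ (φinv := φinv) fun _ => rfl
  have hcancel : ∀ u, φinv * (φ * u) = u := fun u => by
    ext x; simp [φinv, inv_mul_cancel_left₀ (hφ x).ne']
  have hcancel' : ∀ u, φ * (φinv * u) = u := fun u => by
    ext x; simp [φinv, mul_inv_cancel_left₀ (hφ x).ne']
  -- In the coordinates `w = u / φ` the weighted condition on `Θ` is a sup-norm contraction.
  let Φ : C(X, ℝ) → C(X, ℝ) := fun w => φinv * Θ (φ * w)
  have hΦ : ContractingWith k Φ := by
    refine ⟨hk, LipschitzWith.of_dist_le_mul fun w₁ w₂ => ?_⟩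
    have hw := (hdist (φ * w₁) (φ * w₂) dist_nonneg).1 (by rw [hcancel, hcancel])
    exact (hdist _ _ (by positivity)).2 fun x => by
      simpa [mul_assoc] using hΘ _ _ _ dist_nonneg hw x
  have hfix : ∀ u, Θ u = u ↔ Φ (φinv * u) = φinv * u := fun u => by
    simp only [Φ, hcancel']
    exact ⟨fun h => by rw [h], fun h => by rw [← hcancel' (Θ u), h, hcancel']⟩
  refine ⟨φ * ContractingWith.fixedPoint Φ hΦ, (hfix _).2 ?_, fun v hv => ?_, fun y ε hε hy x => ?_⟩
  · rw [hcancel]; exact hΦ.fixedPoint_isFixedPt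
  · rw [← hcancel' v, hΦ.fixedPoint_unique ((hfix v).1 hv)]
  · have hy' : dist (φinv * y) (Φ (φinv * y)) ≤ ε := by
      simpa only [Φ, hcancel'] using (hdist y (Θ y) hε).2 hy
    have h1k : (0 : ℝ) < 1 - k := sub_pos.2 (by exact_mod_cast hk)
    have h := (hΦ.dist_fixedPoint_le (φinv * y)).trans (div_le_div_of_nonneg_right hy' h1k.le)
    rw [← hcancel (ContractingWith.fixedPoint Φ hΦ)] at h
    have := (hdist y _ (by positivity)).1 h x
    rwa [div_mul_eq_mul_div] at this

end WeightedFixedPoint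

theorem exists_fixedPoint_of_weighted_contraction_Icc {a b : ℝ} (hab : a ≤ b) {φ : ℝ → ℝ}
    (hφ : ContinuousOn φ (Icc a b)) (hφpos : ∀ t ∈ Icc a b, 0 < φ t)
    (K : (ℝ → ℝ) → ℝ → ℝ) {k : ℝ≥0} (hk : k < 1)
    (hKcont : ∀ u, Continuous u → ContinuousOn (K u) (Icc a b))
    (hK : ∀ u v, Continuous u → Continuous v → ∀ D, 0 ≤ D →
      (∀ s ∈ Icc a b, |u s - v s| ≤ D * φ s) → ∀ t ∈ Icc a b, |K u t - K v t| ≤ k * D * φ t) :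
    ∃ u₀, Continuous u₀ ∧ (∀ t ∈ Icc a b, u₀ t = K u₀ t) ∧
      (∀ y, Continuous y → ∀ ε, 0 ≤ ε → (∀ t ∈ Icc a b, |y t - K y t| ≤ ε * φ t) →
        ∀ t ∈ Icc a b, |y t - u₀ t| ≤ ε * φ t / (1 - k)) ∧
      (∀ z, Continuous z → (∀ t ∈ Icc a b, z t = K z t) → ∀ t ∈ Icc a b, z t = u₀ t) := by
  have hKcongr : ∀ u v, Continuous u → Continuous v → (∀ s ∈ Icc a b, u s = v s) →
      ∀ t ∈ Icc a b, K u t = K v t := fun u v hu hv huv t ht => by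
    simpa [sub_eq_zero] using hK u v hu hv 0 le_rfl (fun s hs => by simp [huv s hs]) t ht
  let ext : C(Icc a b, ℝ) → ℝ → ℝ := fun w => IccExtend hab w
  have hext : ∀ w, Continuous (ext w) := fun w => w.continuous.Icc_extend'
  have hext_apply : ∀ w t (ht : t ∈ Icc a b), ext w t = w ⟨t, ht⟩ :=
    fun w t ht => IccExtend_of_mem hab w ht
  let res : C(ℝ, ℝ) → C(Icc a b, ℝ) := fun y => y.restrict (Icc a b)
  have hKres : ∀ y : C(ℝ, ℝ), ∀ t ∈ Icc a b, K (ext (res y)) t = K y t :=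
    fun y => hKcongr _ _ (hext _) y.continuous fun s hs => hext_apply _ s hs
  let Θ : C(Icc a b, ℝ) → C(Icc a b, ℝ) := fun w => ⟨(Icc a b).domRestrict (K (ext w)),
    (hKcont _ (hext w)).domRestrict⟩
  obtain ⟨w₀, hw₀, huniq, hstab⟩ := exists_fixedPoint_of_weighted_contraction
    ⟨(Icc a b).domRestrict φ, hφ.domRestrict⟩ (fun x => hφpos x x.2) Θ hk
    fun u v D hD huv x => hK _ _ (hext u) (hext v) D hD
      (fun s hs => by rw [hext_apply _ s hs, hext_apply _ s hs]; exact huv ⟨s, hs⟩) x x.2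
  refine ⟨ext w₀, hext w₀, fun t ht => ?_, fun y hy ε hε hyK t ht => ?_, fun z hz hzK t ht => ?_⟩
  · rw [hext_apply w₀ t ht]
    conv_lhs => rw [← hw₀]
    rfl
  · rw [hext_apply w₀ t ht]
    refine hstab (res ⟨y, hy⟩) ε hε (fun x => ?_) ⟨t, ht⟩
    change |y x - K (ext (res ⟨y, hy⟩)) x| ≤ ε * φ x
    rw [hKres ⟨y, hy⟩ x x.2]
    exact hyK x x.2
  · have hfix : Θ (res ⟨z, hz⟩) = res ⟨z, hz⟩ := by
      ext x
      change K (ext (res ⟨z, hz⟩)) x = z x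
      rw [hKres ⟨z, hz⟩ x x.2, ContinuousMap.coe_mk, ← hzK x x.2]
    rw [hext_apply w₀ t ht, ← huniq _ hfix]
    rfl

lemma continuousOn_rpow_sub_mul_of_abs_sub_le {ψ v r : ℝ → ℝ} {T p c : ℝ} (hT : 0 < T)
    (hψ : Continuous ψ) (hmono : StrictMonoOn ψ (Icc 0 T)) (hv : ContinuousOn v (Icc 0 T))
    (hr : ContinuousOn r (Icc 0 T)) (hvr : ∀ t ∈ Icc 0 T, |v t - (ψ t - ψ 0) ^ p * c| ≤ r t) :
    ContinuousOn (fun t => (ψ t - ψ 0) ^ p * c) (Icc 0 T) := by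
  rcases le_or_gt 0 p with hp | hp
  · exact (((hψ.sub continuous_const).rpow_const fun _ => Or.inr hp).mul
      continuous_const).continuousOn
  rcases eq_or_ne c 0 with rfl | hc
  · simpa using continuousOn_const
  -- For `p < 0` and `c ≠ 0` the function blows up at `0⁺`, while it stays within `r` of `v`.
  exfalso
  obtain ⟨B, hB⟩ := isCompact_Icc.exists_bound_of_continuousOn (hv.abs.add hr)
  have hψ0 : Tendsto (fun t => ψ t - ψ 0) (𝓝[>] 0) (𝓝[>] 0) := by
    refine tendsto_nhdsWithin_of_tendsto_nhds_of_eventually_within _ ?_ ?_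
    · have h := ((hψ.tendsto 0).sub_const (ψ 0)).mono_left (nhdsWithin_le_nhds (s := Ioi 0))
      rwa [sub_self] at h
    · filter_upwards [Ioo_mem_nhdsGT hT] with t ht
      exact sub_pos.2 (hmono (left_mem_Icc.2 hT.le) (Ioo_subset_Icc_self ht) ht.1)
  have hblow : Tendsto (fun t => (ψ t - ψ 0) ^ p * |c|) (𝓝[>] 0) atTop :=
    ((tendsto_rpow_neg_nhdsGT_zero hp).comp hψ0).atTop_mul_const (abs_pos.2 hc)
  obtain ⟨t, hBt, ht⟩ := ((hblow.eventually_gt_atTop B).and (Ioo_mem_nhdsGT hT)).exists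
  have hle : |(ψ t - ψ 0) ^ p * c| ≤ B := by
    have h1 := abs_sub_abs_le_abs_sub ((ψ t - ψ 0) ^ p * c) (v t)
    have h2 := (le_abs_self _).trans (hB t (Ioo_subset_Icc_self ht))
    rw [abs_sub_comm] at h1
    simp only [Pi.add_apply] at h2
    linarith [hvr t (Ioo_subset_Icc_self ht)]
  rw [abs_mul, abs_of_nonneg (Real.rpow_nonneg (sub_nonneg.2 (hmono.monotoneOn
    (left_mem_Icc.2 hT.le) (Ioo_subset_Icc_self ht) ht.1.le)) _)] at hle
  exact (lt_irrefl B) (hBt.trans_le hle)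

lemma rpow_le_div_one_sub_rpow {x a k δ : ℝ} (hx : 0 ≤ x) (ha : 0 ≤ a) (hk0 : 0 ≤ k)
    (hk1 : k < 1) (hδ0 : 0 < δ) (hδ1 : δ ≤ 1) (hxa : x ≤ a / (1 - k)) :
    x ^ δ ≤ a ^ δ / (1 - k ^ δ) := by
  have hkδ : k ^ δ < 1 := Real.rpow_lt_one hk0 hk1 hδ0
  have hsub : 1 - k ^ δ ≤ (1 - k) ^ δ := by
    have := Real.rpow_add_le_add_rpow (sub_nonneg.2 hk1.le) hk0 hδ0.le hδ1
    rw [sub_add_cancel, Real.one_rpow] at this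
    linarith
  calc x ^ δ ≤ (a / (1 - k)) ^ δ := Real.rpow_le_rpow hx hxa hδ0.le
    _ = a ^ δ / (1 - k) ^ δ := Real.div_rpow ha (sub_nonneg.2 hk1.le) δ
    _ ≤ a ^ δ / (1 - k ^ δ) :=
        div_le_div_of_nonneg_left (Real.rpow_nonneg ha δ) (sub_pos.2 hkδ) hsub

theorem stmt_17_general (T : ℝ) (hT : 0 < T)
    (α γ : ℝ) (hα0 : 0 < α) (hα1 : α ≤ 1)
    (δ : ℝ) (hδ0 : 0 < δ) (hδ1 : δ ≤ 1)
    (ψ : ℝ → ℝ) (hψ : ContDiff ℝ 1 ψ)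
    (hψ' : ∀ t ∈ Set.Icc 0 T, 0 < deriv ψ t)
    (f : ℝ → ℝ → ℝ) (hfcont : Continuous fun p : ℝ × ℝ => f p.1 p.2)
    (Lf : ℝ) (hf : ∀ t u v, |f t u - f t v| ≤ Lf * |u - v|)
    (φ : ℝ → ℝ) (hφpos : ∀ t ∈ Set.Icc 0 T, 0 < φ t)
    (hφcont : ContinuousOn φ (Set.Icc 0 T))
    (Cφ : ℝ)
    (hH4 : ∀ t ∈ Set.Icc 0 T,
      (1 / Real.Gamma α) * ∫ s in (0 : ℝ)..t, deriv ψ s * (ψ t - ψ s) ^ (α - 1) * φ s ≤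
        Cφ * φ t)
    (hsmall : Lf ^ δ * Cφ ^ δ < 1)
    (x₀ : ℝ) (y : ℝ → ℝ) (hy : Continuous y)
    (hineq : ∀ t ∈ Set.Icc 0 T,
      |y t - (ψ t - ψ 0) ^ (γ - 1) / Real.Gamma γ * x₀ -
          (1 / Real.Gamma α) * ∫ s in (0 : ℝ)..t,
            deriv ψ s * (ψ t - ψ s) ^ (α - 1) * f s (y s)| ≤
        (1 / Real.Gamma α) * ∫ s in (0 : ℝ)..t,
          deriv ψ s * (ψ t - ψ s) ^ (α - 1) * φ s) :
    ∃ y₀ : ℝ → ℝ, Continuous y₀ ∧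
      (∀ t ∈ Set.Icc 0 T,
        y₀ t = (ψ t - ψ 0) ^ (γ - 1) / Real.Gamma γ * x₀ +
          (1 / Real.Gamma α) * ∫ s in (0 : ℝ)..t,
            deriv ψ s * (ψ t - ψ s) ^ (α - 1) * f s (y₀ s)) ∧
      (∀ t ∈ Set.Icc 0 T,
        |y t - y₀ t| ^ δ ≤ Cφ ^ δ * φ t ^ δ / (1 - Lf ^ δ * Cφ ^ δ)) ∧
      (∀ z : ℝ → ℝ, Continuous z →
        (∀ t ∈ Set.Icc 0 T,
          z t = (ψ t - ψ 0) ^ (γ - 1) / Real.Gamma γ * x₀ +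
            (1 / Real.Gamma α) * ∫ s in (0 : ℝ)..t,
              deriv ψ s * (ψ t - ψ s) ^ (α - 1) * f s (z s)) →
        ∀ t ∈ Set.Icc 0 T, z t = y₀ t) := by
  have hψd : Differentiable ℝ ψ := hψ.differentiable one_ne_zero
  have hLf : 0 ≤ Lf := (abs_nonneg _).trans (by simpa using hf 0 1 0)
  have hCφ : 0 ≤ Cφ := le_of_mul_le_mul_right (by simpa using hH4 0 (left_mem_Icc.2 hT.le))
    (hφpos 0 (left_mem_Icc.2 hT.le))
  have hk1 : Lf * Cφ < 1 := lt_of_not_ge fun h =>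
    (Real.one_le_rpow h hδ0.le).not_gt (by rwa [Real.mul_rpow hLf hCφ])
  have hk : (Lf * Cφ).toNNReal = Lf * Cφ := Real.coe_toNNReal _ (mul_nonneg hLf hCφ)
  have hI : ∀ u, Continuous u → ContinuousOn (psiIntegral α ψ fun s => f s (u s)) (Icc 0 T) :=
    fun u hu => continuousOn_psiIntegral hα0 hα1 hψd hψ'
      (hfcont.comp (continuous_id.prodMk hu)).continuousOn
  have hg₀ : ContinuousOn (fun t => (ψ t - ψ 0) ^ (γ - 1) / Real.Gamma γ * x₀) (Icc 0 T) := by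
    refine (continuousOn_rpow_sub_mul_of_abs_sub_le (c := x₀ / Real.Gamma γ)
      (r := fun t => Cφ * φ t) hT hψd.continuous
      (strictMonoOn_Icc_of_deriv_pos hψd hψ') (hy.continuousOn.sub (hI y hy))
      (continuousOn_const.mul hφcont) fun t ht => ?_).congr fun t _ => by ring
    rw [mul_div_assoc', ← div_mul_eq_mul_div, Pi.sub_apply, sub_right_comm]
    exact (hineq t ht).trans (hH4 t ht)
  obtain ⟨y₀, hy₀, hfix, hstab, huniq⟩ := exists_fixedPoint_of_weighted_contraction_Icc hT.le
    hφcont hφpos (fun u t => (ψ t - ψ 0) ^ (γ - 1) / Real.Gamma γ * x₀ +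
      psiIntegral α ψ (fun s => f s (u s)) t) (Real.toNNReal_lt_one.2 hk1)
    (fun u hu => hg₀.add (hI u hu)) fun u v hu hv D hD huv t ht => by
      rw [add_sub_add_left_eq_sub, hk]
      exact ((abs_psiIntegral_comp_sub_le hα0 hψd hψ' hfcont hLf hf hφcont hu hv huv ht).trans
        (mul_le_mul_of_nonneg_left (hH4 t ht) (mul_nonneg hLf hD))).trans_eq (by ring)
  refine ⟨y₀, hy₀, hfix, fun t ht => ?_, huniq⟩
  have h := hstab y hy Cφ hCφ (fun t ht => by
    rw [← sub_sub]; exact (hineq t ht).trans (hH4 t ht)) t ht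
  rw [hk] at h
  rw [← Real.mul_rpow hCφ (hφpos t ht).le, ← Real.mul_rpow hLf hCφ]
  exact rpow_le_div_one_sub_rpow (abs_nonneg _) (mul_nonneg hCφ (hφpos t ht).le)
    (mul_nonneg hLf hCφ) hk1 hδ0 hδ1 h

theorem stmt_17 (T : ℝ) (hT : 0 < T)
    (α β γ : ℝ) (hα0 : 0 < α) (hα1 : α ≤ 1) (hβ0 : 0 ≤ β) (hβ1 : β ≤ 1)
    (hγ : γ = α + β * (1 - α))
    (δ : ℝ) (hδ0 : 0 < δ) (hδ1 : δ ≤ 1)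
    (ψ : ℝ → ℝ) (hψ : ContDiff ℝ 1 ψ) (hmono : StrictMonoOn ψ (Set.Icc 0 T))
    (hψ' : ∀ t ∈ Set.Icc 0 T, 0 < deriv ψ t)
    (f : ℝ → ℝ → ℝ) (hfcont : Continuous fun p : ℝ × ℝ => f p.1 p.2)
    (Lf : ℝ) (hLf : 0 ≤ Lf) (hf : ∀ t u v, |f t u - f t v| ≤ Lf * |u - v|)
    (φ : ℝ → ℝ) (hφpos : ∀ t ∈ Set.Icc 0 T, 0 < φ t)
    (hφcont : ContinuousOn φ (Set.Icc 0 T)) (hφmono : MonotoneOn φ (Set.Icc 0 T))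
    (Cφ : ℝ) (hCφ : 0 < Cφ)
    (hH4 : ∀ t ∈ Set.Icc 0 T,
      (1 / Real.Gamma α) * ∫ s in (0 : ℝ)..t, deriv ψ s * (ψ t - ψ s) ^ (α - 1) * φ s ≤
        Cφ * φ t)
    (hsmall : Lf ^ δ * Cφ ^ δ < 1)
    (x₀ : ℝ) (y : ℝ → ℝ) (hy : Continuous y)
    (hineq : ∀ t ∈ Set.Icc 0 T,
      |y t - (ψ t - ψ 0) ^ (γ - 1) / Real.Gamma γ * x₀ -
          (1 / Real.Gamma α) * ∫ s in (0 : ℝ)..t,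
            deriv ψ s * (ψ t - ψ s) ^ (α - 1) * f s (y s)| ≤
        (1 / Real.Gamma α) * ∫ s in (0 : ℝ)..t,
          deriv ψ s * (ψ t - ψ s) ^ (α - 1) * φ s) :
    ∃ y₀ : ℝ → ℝ, Continuous y₀ ∧
      (∀ t ∈ Set.Icc 0 T,
        y₀ t = (ψ t - ψ 0) ^ (γ - 1) / Real.Gamma γ * x₀ +
          (1 / Real.Gamma α) * ∫ s in (0 : ℝ)..t,
            deriv ψ s * (ψ t - ψ s) ^ (α - 1) * f s (y₀ s)) ∧
      (∀ t ∈ Set.Icc 0 T,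
        |y t - y₀ t| ^ δ ≤ Cφ ^ δ * φ t ^ δ / (1 - Lf ^ δ * Cφ ^ δ)) ∧
      (∀ z : ℝ → ℝ, Continuous z →
        (∀ t ∈ Set.Icc 0 T,
          z t = (ψ t - ψ 0) ^ (γ - 1) / Real.Gamma γ * x₀ +
            (1 / Real.Gamma α) * ∫ s in (0 : ℝ)..t,
              deriv ψ s * (ψ t - ψ s) ^ (α - 1) * f s (z s)) →
        ∀ t ∈ Set.Icc 0 T, z t = y₀ t) :=
  stmt_17_general T hT α γ hα0 hα1 δ hδ0 hδ1 ψ hψ hψ' f hfcont Lf hf φ hφpos hφcont Cφ hH4 hsmall x₀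
    y hy hineq
end
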